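/- arXiv:0809.0938 — 2 statements merged into one kernel-verified Lean document; each statement's English description precedes it below -/
import Mathlib

section
/- Let G be a finitely generated fully residually free group and let G₁, G₂ be finitely generated non-abelian subgroups of G such that H = G₁ ∩ G₂ has finite index in both G₁ and G₂. Then for every g in the subgroup ⟨G₁, G₂⟩ generated by G₁ and G₂, and for each j ∈ {1,2}, the intersection G_j ∩ gHg⁻¹ has finite index both in G_j and in gHg⁻¹. -/
open Pointwise

/-- A group `G` is fully residually free if for every finite set of nontrivial
elements there is a homomorphism to a free group not killing any of them. -/
def IsFullyResiduallyFree (G : Type*) [Group G] : Prop :=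
  ∀ s : Finset G, (∀ g ∈ s, g ≠ 1) →
    ∃ (ι : Type) (φ : G →* FreeGroup ι), ∀ g ∈ s, φ g ≠ 1

/-!
Both `G₁` and `G₂` are commensurable with `H = G₁ ∩ G₂`, and a subgroup commensurable with `H`
lies in the commensurator of `H`. Hence so does `⟨G₁, G₂⟩`, i.e. `gHg⁻¹` is commensurable with
`H`, and therefore with `G₁` and `G₂`.
-/

namespace Subgroup

variable {G : Type*} [Group G] {H K : Subgroup G}

theorem commensurable_of_le (hHK : H ≤ K) (h : H.relIndex K ≠ 0) : Commensurable H K :=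
  ⟨h, by simp [relIndex_eq_one.mpr hHK]⟩

theorem Commensurable.le_commensurator (h : Commensurable H K) :
    K ≤ Commensurable.commensurator H := fun g hg => by
  rw [Commensurable.commensurator_mem_iff]
  exact (h.conj _).trans (by rw [conjAct_pointwise_smul_eq_self (le_normalizer hg)]; exact h.symm)

theorem Commensurable.inf_relIndex_ne_zero (h : Commensurable H K) :
    (H ⊓ K).relIndex H ≠ 0 ∧ (H ⊓ K).relIndex K ≠ 0 := by
  rw [inf_relIndex_right, inf_comm, inf_relIndex_right]
  exact h.symm

end Subgroup

theorem conj_intersection_finite_index_general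
    {G : Type*} [Group G]
    (G₁ G₂ : Subgroup G)
    (h1 : (G₁ ⊓ G₂).relIndex G₁ ≠ 0) (h2 : (G₁ ⊓ G₂).relIndex G₂ ≠ 0) :
    ∀ g ∈ G₁ ⊔ G₂,
      ((G₁ ⊓ ConjAct.toConjAct g • (G₁ ⊓ G₂)).relIndex G₁ ≠ 0 ∧
        (G₁ ⊓ ConjAct.toConjAct g • (G₁ ⊓ G₂)).relIndex
          (ConjAct.toConjAct g • (G₁ ⊓ G₂)) ≠ 0) ∧
      ((G₂ ⊓ ConjAct.toConjAct g • (G₁ ⊓ G₂)).relIndex G₂ ≠ 0 ∧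
        (G₂ ⊓ ConjAct.toConjAct g • (G₁ ⊓ G₂)).relIndex
          (ConjAct.toConjAct g • (G₁ ⊓ G₂)) ≠ 0) := by
  intro g hg
  have hc₁ : (G₁ ⊓ G₂).Commensurable G₁ := Subgroup.commensurable_of_le inf_le_left h1
  have hc₂ : (G₁ ⊓ G₂).Commensurable G₂ := Subgroup.commensurable_of_le inf_le_right h2
  have hgH : (ConjAct.toConjAct g • (G₁ ⊓ G₂)).Commensurable (G₁ ⊓ G₂) :=
    sup_le hc₁.le_commensurator hc₂.le_commensurator hg
  exact ⟨(hgH.trans hc₁).symm.inf_relIndex_ne_zero, (hgH.trans hc₂).symm.inf_relIndex_ne_zero⟩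

theorem conj_intersection_finite_index
    {G : Type*} [Group G] (hG : Group.FG G) (hfrf : IsFullyResiduallyFree G)
    (G₁ G₂ : Subgroup G) (hG₁ : G₁.FG) (hG₂ : G₂.FG)
    (hna₁ : ∃ a b : G, a ∈ G₁ ∧ b ∈ G₁ ∧ a * b ≠ b * a)
    (hna₂ : ∃ a b : G, a ∈ G₂ ∧ b ∈ G₂ ∧ a * b ≠ b * a)
    (h1 : (G₁ ⊓ G₂).relIndex G₁ ≠ 0) (h2 : (G₁ ⊓ G₂).relIndex G₂ ≠ 0) :
    ∀ g ∈ G₁ ⊔ G₂,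
      ((G₁ ⊓ ConjAct.toConjAct g • (G₁ ⊓ G₂)).relIndex G₁ ≠ 0 ∧
        (G₁ ⊓ ConjAct.toConjAct g • (G₁ ⊓ G₂)).relIndex
          (ConjAct.toConjAct g • (G₁ ⊓ G₂)) ≠ 0) ∧
      ((G₂ ⊓ ConjAct.toConjAct g • (G₁ ⊓ G₂)).relIndex G₂ ≠ 0 ∧
        (G₂ ⊓ ConjAct.toConjAct g • (G₁ ⊓ G₂)).relIndex
          (ConjAct.toConjAct g • (G₁ ⊓ G₂)) ≠ 0) :=
  conj_intersection_finite_index_general G₁ G₂ h1 h2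
end

section
/- Let G be a fully residually free group and let K be an abelian subgroup of G of finite index. Then G is abelian. -/
open Pointwise

/-!
Roots are unique in the torsion-free free groups: if `a ^ n` commutes with `b`, then `b a b⁻¹`
and `a` have the same `n`-th power, hence coincide. So two elements of a free group commute as soon
as some nonzero powers of them do. Any two elements of `G` have nonzero powers in `K`, which commute;
a homomorphism to a free group that does not kill their commutator then gives a contradiction.
-/

section TorsionFree

variable {G : Type*} [Group G] [IsMulTorsionFree G] {a b : G}

theorem Commute.of_pow_left {n : ℕ} (hn : n ≠ 0) (h : Commute (a ^ n) b) : Commute a b := by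
  have hconj : (b * a * b⁻¹) ^ n = a ^ n := by
    rw [conj_pow, mul_inv_eq_iff_eq_mul]
    exact h.symm.eq
  exact (mul_inv_eq_iff_eq_mul.mp (pow_left_injective hn hconj)).symm

theorem Commute.of_pow_pow {n m : ℕ} (hn : n ≠ 0) (hm : m ≠ 0)
    (h : Commute (a ^ n) (b ^ m)) : Commute a b :=
  ((h.of_pow_left hn).symm.of_pow_left hm).symm

end TorsionFree

open scoped commutatorElement in
theorem IsFullyResiduallyFree.commute_of_pow_pow {G : Type*} [Group G]
    (hG : IsFullyResiduallyFree G) {a b : G} {n m : ℕ} (hn : n ≠ 0) (hm : m ≠ 0)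
    (h : Commute (a ^ n) (b ^ m)) : Commute a b := by
  rw [← commutatorElement_eq_one_iff_commute]
  by_contra hab
  obtain ⟨ι, φ, hφ⟩ := hG {⁅a, b⁆} (by simpa using hab)
  have hφab : Commute (φ a) (φ b) :=
    Commute.of_pow_pow hn hm (by simpa only [map_pow] using h.map φ)
  refine hφ _ (Finset.mem_singleton_self _) ?_
  rw [map_commutatorElement]
  exact hφab.commutator_eq

theorem abelian_of_abelian_finite_index
    {G : Type*} [Group G] (hfrf : IsFullyResiduallyFree G)
    (K : Subgroup G) (hab : ∀ a ∈ K, ∀ b ∈ K, a * b = b * a)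
    (hind : K.index ≠ 0) :
    ∀ a b : G, a * b = b * a := by
  intro a b
  obtain ⟨n, hn, -, ha⟩ := Subgroup.exists_pow_mem_of_index_ne_zero hind a
  obtain ⟨m, hm, -, hb⟩ := Subgroup.exists_pow_mem_of_index_ne_zero hind b
  exact hfrf.commute_of_pow_pow hn.ne' hm.ne' (hab _ ha _ hb)
end
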